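/- arXiv:2511.18420 — 3 statements merged into one kernel-verified Lean document; each statement's English description precedes it below -/
import Mathlib

section
/- Let q be a prime power, f : F_q^k → S any function, and t_d ≤ t_f. Let C be a systematic [n, k] linear code over F_q with minimum distance at least 2t_d+1, with encoding u ↦ c_u (the first k coordinates of c_u equal u), and let u_1, …, u_{q^k} enumerate all vectors of F_q^k. Then N(D_f(t_d, t_f : u_1, …, u_{q^k})) ≤ N(D_{C,f}(t_f : u_1, …, u_{q^k})) + n − k. -/
/-- The distance requirement matrix `D_f(t_d, t_f : u_1, …, u_M)`. -/
def DRM {F S : Type*} [Fintype F] [DecidableEq F] [DecidableEq S] {k M : ℕ}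
    (f : (Fin k → F) → S) (td tf : ℕ) (u : Fin M → Fin k → F) :
    Fin M → Fin M → ℕ := fun i j =>
  if u i ≠ u j ∧ f (u i) = f (u j) then 2 * td + 1 - hammingDist (u i) (u j)
  else if f (u i) ≠ f (u j) then 2 * tf + 1 - hammingDist (u i) (u j)
  else 0

/-- The coded distance requirement matrix `D_{C,f}(t_f : u_1, …, u_M)`. -/
def CDRM {F S : Type*} [Fintype F] [DecidableEq F] [DecidableEq S] {k n M : ℕ}
    (cenc : (Fin k → F) → (Fin n → F)) (f : (Fin k → F) → S) (tf : ℕ)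
    (u : Fin M → Fin k → F) : Fin M → Fin M → ℕ := fun i j =>
  if f (u i) ≠ f (u j) then 2 * tf + 1 - hammingDist (cenc (u i)) (cenc (u j)) else 0

/-- `N(D)`: the least length `r` for which a `D`-code of length `r` over `F` exists. -/
noncomputable def Nmat (F : Type*) [Fintype F] [DecidableEq F] {M : ℕ}
    (D : Fin M → Fin M → ℕ) : ℕ :=
  sInf {r : ℕ | ∃ p : Fin M → Fin r → F, ∀ i j, D i j ≤ hammingDist (p i) (p j)}

/-!
Take a `D_{C,f}`-code `p` of optimal length and append to `p_i` the `n - k` parity symbols of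
`c_{u_i}`. As `C` is systematic, `d(c_u, c_v) = d(u, v) + d(parity c_u, parity c_v)`; hence when
`f(u_i) ≠ f(u_j)` the parity symbols supply exactly the distance that `D_f` demands beyond
`D_{C,f}`, and when `u_i ≠ u_j` but `f(u_i) = f(u_j)` the minimum distance `2t_d + 1` of `C`
already covers `D_f`. An optimal `D_{C,f}`-code exists (so `N` is not the junk value `sInf ∅ = 0`)
because repeating every `u_i` `2t_f + 1` times gives one.
-/

section Hamming

variable {F : Type*} [DecidableEq F]

theorem hammingDist_eq_sum_ite {m : ℕ} (x y : Fin m → F) :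
    hammingDist x y = ∑ i, if x i ≠ y i then 1 else 0 := by
  simp [hammingDist, Finset.card_filter]

theorem hammingDist_append {m l : ℕ} (x x' : Fin m → F) (y y' : Fin l → F) :
    hammingDist (Fin.append x y) (Fin.append x' y') = hammingDist x x' + hammingDist y y' := by
  simp [hammingDist_eq_sum_ite, Fin.sum_univ_add, Fin.append_left, Fin.append_right]

theorem hammingDist_repeat (m : ℕ) {l : ℕ} (x y : Fin l → F) :
    hammingDist (Fin.repeat m x) (Fin.repeat m y) = m * hammingDist x y := by
  let g : Fin l → ℕ := fun j => if x j ≠ y j then 1 else 0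
  calc hammingDist (Fin.repeat m x) (Fin.repeat m y)
      = ∑ p : Fin m × Fin l, g p.2 :=
        (hammingDist_eq_sum_ite _ _).trans <| Fintype.sum_equiv finProdFinEquiv.symm _ _
          fun i => by rw [Fin.repeat_apply, Fin.repeat_apply]; rfl
    _ = m * hammingDist x y := by
      simp only [Fintype.sum_prod_type, Finset.sum_const, Finset.card_univ, Fintype.card_fin,
        smul_eq_mul]
      rw [hammingDist_eq_sum_ite]

theorem hammingDist_comp_cast {m l : ℕ} (h : m = l) (v w : Fin l → F) :
    hammingDist (fun i => v (Fin.cast h i)) (fun i => w (Fin.cast h i)) = hammingDist v w := by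
  subst h
  rfl

def Fin.dropLE {α : Type*} {k n : ℕ} (h : k ≤ n) (v : Fin n → α) : Fin (n - k) → α :=
  fun j => v ⟨k + j, by omega⟩

theorem hammingDist_eq_take_add_dropLE {k n : ℕ} (h : k ≤ n) (v w : Fin n → F) :
    hammingDist v w = hammingDist (Fin.take k h v) (Fin.take k h w) +
      hammingDist (Fin.dropLE h v) (Fin.dropLE h w) := by
  have hsplit : ∀ z : Fin n → F,
      (fun i => z (Fin.cast (by omega) i)) = Fin.append (Fin.take k h z) (Fin.dropLE h z) := by
    intro z
    funext i
    refine Fin.addCases (fun a => ?_) (fun b => ?_) i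
    · rw [Fin.append_left, Fin.take_apply]
      rfl
    · rw [Fin.append_right]
      rfl
  rw [← hammingDist_append, ← hsplit, ← hsplit, hammingDist_comp_cast]

end Hamming

section DistanceRequirement

variable {F : Type*} [DecidableEq F] {M : ℕ}

def IsDCode {r : ℕ} (D : Fin M → Fin M → ℕ) (p : Fin M → Fin r → F) : Prop :=
  ∀ i j, D i j ≤ hammingDist (p i) (p j)

theorem isDCode_repeat {r : ℕ} {D : Fin M → Fin M → ℕ} {p : Fin M → Fin r → F} (c : ℕ)
    (hD : ∀ i j, D i j ≤ c * hammingDist (p i) (p j)) :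
    IsDCode D fun i => Fin.repeat c (p i) := fun i j => by
  rw [hammingDist_repeat]
  exact hD i j

variable [Fintype F]

theorem Nmat_le_of_isDCode {r : ℕ} {D : Fin M → Fin M → ℕ} {p : Fin M → Fin r → F}
    (hp : IsDCode D p) : Nmat F D ≤ r :=
  Nat.sInf_le ⟨p, hp⟩

theorem exists_isDCode_Nmat {D : Fin M → Fin M → ℕ}
    (h : ∃ r, ∃ p : Fin M → Fin r → F, IsDCode D p) :
    ∃ p : Fin M → Fin (Nmat F D) → F, IsDCode D p :=
  Nat.sInf_mem h

variable {S : Type*} [DecidableEq S] {k n : ℕ}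

theorem CDRM_le_mul_hammingDist (cenc : (Fin k → F) → (Fin n → F)) (f : (Fin k → F) → S)
    (tf : ℕ) (u : Fin M → Fin k → F) (i j : Fin M) :
    CDRM cenc f tf u i j ≤ (2 * tf + 1) * hammingDist (u i) (u j) := by
  unfold CDRM
  split_ifs with hf
  · have : 0 < hammingDist (u i) (u j) := hammingDist_pos.2 fun h => hf (congrArg f h)
    calc 2 * tf + 1 - _ ≤ 2 * tf + 1 := Nat.sub_le _ _
      _ ≤ _ := Nat.le_mul_of_pos_right _ this
  · exact Nat.zero_le _

end DistanceRequirement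

theorem Nmat_DRM_le_Nmat_CDRM_add_general
    {F S : Type*} [Field F] [Fintype F] [DecidableEq F] [DecidableEq S]
    {k n : ℕ} (hkn : k ≤ n) (f : (Fin k → F) → S) (td tf : ℕ)
    (C : (Fin k → F) →ₗ[F] (Fin n → F))
    (hCsys : ∀ (u : Fin k → F) (i : Fin k), C u (Fin.castLE hkn i) = u i)
    (hCdist : ∀ u v : Fin k → F, u ≠ v → 2 * td + 1 ≤ hammingDist (C u) (C v))
    (u : Fin (Fintype.card F ^ k) → (Fin k → F)) :
    Nmat F (DRM f td tf u) ≤ Nmat F (CDRM (⇑C) f tf u) + (n - k) := by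
  have hsys (x y : Fin k → F) : hammingDist (C x) (C y) =
      hammingDist x y + hammingDist (Fin.dropLE hkn (C x)) (Fin.dropLE hkn (C y)) := by
    rw [hammingDist_eq_take_add_dropLE hkn]
    congr 2 <;> exact funext (hCsys _)
  obtain ⟨p, hp⟩ := exists_isDCode_Nmat
    ⟨_, _, isDCode_repeat _ (CDRM_le_mul_hammingDist (⇑C) f tf u)⟩
  refine Nmat_le_of_isDCode (p := fun i => Fin.append (p i) (Fin.dropLE hkn (C (u i))))
    fun i j => ?_
  have hCij := hsys (u i) (u j)
  dsimp only [DRM]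
  rw [hammingDist_append]
  split_ifs with hne hf
  · have := hCdist _ _ hne.1
    omega
  · have hpij := hp i j
    simp only [CDRM, if_pos hf] at hpij
    omega
  · exact Nat.zero_le _

/-- For a systematic `[n, k]` linear code `C` over `F_q` with minimum distance
at least `2t_d+1`, `N(D_f(t_d,t_f : u_1,…,u_{q^k})) ≤ N(D_{C,f}(t_f : u_1,…,u_{q^k})) + n − k`. -/
theorem Nmat_DRM_le_Nmat_CDRM_add
    {F S : Type*} [Field F] [Fintype F] [DecidableEq F] [DecidableEq S]
    {k n : ℕ} (hkn : k ≤ n) (f : (Fin k → F) → S) (td tf : ℕ) (htdtf : td ≤ tf)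
    (C : (Fin k → F) →ₗ[F] (Fin n → F)) (hCinj : Function.Injective C)
    (hCsys : ∀ (u : Fin k → F) (i : Fin k), C u (Fin.castLE hkn i) = u i)
    (hCdist : ∀ u v : Fin k → F, u ≠ v → 2 * td + 1 ≤ hammingDist (C u) (C v))
    (u : Fin (Fintype.card F ^ k) → (Fin k → F)) (hu : Function.Bijective u) :
    Nmat F (DRM f td tf u) ≤ Nmat F (CDRM (⇑C) f tf u) + (n - k) :=
  Nmat_DRM_le_Nmat_CDRM_add_general hkn f td tf C hCsys hCdist u
end

section
/- Let C ⊆ F_q^n be an MDS code with parameters (n, M, d)_q, i.e., |C| = M = q^{n−d+1} ≥ 2 and minimum distance d. Then the minimum-distance graph G(C) is connected. -/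
/-- The minimum distance of a code `C ⊆ F^n`. -/
noncomputable def minDist {F : Type*} [Fintype F] [DecidableEq F] {n : ℕ}
    (C : Set (Fin n → F)) : ℕ :=
  sInf {d : ℕ | ∃ x ∈ C, ∃ y ∈ C, x ≠ y ∧ hammingDist x y = d}

/-- The minimum-distance graph `G(C)`. -/
noncomputable def mdGraph {F : Type*} [Fintype F] [DecidableEq F] {n : ℕ}
    (C : Set (Fin n → F)) : SimpleGraph C where
  Adj x y := x ≠ y ∧ hammingDist (x : Fin n → F) (y : Fin n → F) = minDist C
  symm := by
    constructor
    rintro x y ⟨hxy, hd⟩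
    exact ⟨hxy.symm, by rwa [hammingDist_comm]⟩
  loopless := by
    constructor
    rintro x ⟨hxx, -⟩
    exact hxx rfl

/-!
Any `n - d + 1` coordinates of an MDS code are an information set: two codewords agreeing there
would be at distance `< d`, so restriction to them is injective, hence bijective by counting.
Given codewords `x, y` at distance `e > d`, interpolate a codeword `z` that equals `y` outside
`d` of the `e` positions where `x` and `y` differ, and equals `x` at one of those `d` positions.
Then `z` is adjacent to `y` and strictly closer to `x`, so induction on `e` connects `x` to `y`.
-/

open Finset

theorem hammingDist_le_card_of_eqOn_compl {ι : Type*} [Fintype ι] {β : ι → Type*}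
    [∀ i, DecidableEq (β i)] {x y : ∀ i, β i} {T : Finset ι} (h : ∀ i ∉ T, x i = y i) :
    hammingDist x y ≤ #T :=
  card_le_card fun i hi => by_contra fun hiT => (mem_filter.mp hi).2 (h i hiT)

section Code

variable {F : Type*} [Fintype F] [DecidableEq F] {n : ℕ} {C : Set (Fin n → F)}

theorem minDist_le_hammingDist {x y : Fin n → F} (hx : x ∈ C) (hy : y ∈ C) (hne : x ≠ y) :
    minDist C ≤ hammingDist x y :=
  Nat.sInf_le ⟨x, hx, y, hy, hne, rfl⟩

theorem minDist_pos {x y : Fin n → F} (hx : x ∈ C) (hy : y ∈ C) (hne : x ≠ y) :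
    0 < minDist C := by
  obtain ⟨a, -, b, -, hab, h⟩ :
      minDist C ∈ {d | ∃ x ∈ C, ∃ y ∈ C, x ≠ y ∧ hammingDist x y = d} :=
    Nat.sInf_mem ⟨_, x, hx, y, hy, hne, rfl⟩
  exact h ▸ hammingDist_pos.mpr hab

theorem eq_of_eqOn_of_lt_card_add_minDist {x y : Fin n → F} (hx : x ∈ C) (hy : y ∈ C)
    {S : Finset (Fin n)} (hS : n < #S + minDist C) (h : ∀ i ∈ S, x i = y i) : x = y := by
  by_contra hne
  have hle : hammingDist x y ≤ #Sᶜ :=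
    hammingDist_le_card_of_eqOn_compl fun i hi => h i (by simpa using hi)
  have hge := minDist_le_hammingDist hx hy hne
  have hpos := hammingDist_pos.mpr hne
  rw [card_compl, Fintype.card_fin] at hle
  omega

theorem exists_mem_eqOn_of_card_eq_pow {S : Finset (Fin n)} (hS : n < #S + minDist C)
    (hC : Nat.card C = Fintype.card F ^ #S) (v : Fin n → F) :
    ∃ c ∈ C, ∀ i ∈ S, c i = v i := by
  let restrict : C → (S → F) := fun c i => (c : Fin n → F) i
  have hinj : Function.Injective restrict := fun a b hab =>
    Subtype.ext <| eq_of_eqOn_of_lt_card_add_minDist a.2 b.2 hS fun i hi => congrFun hab ⟨i, hi⟩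
  have hcard : Nat.card (S → F) ≤ Nat.card C := by simp [hC]
  obtain ⟨c, hc⟩ := (hinj.bijective_of_nat_card_le hcard).2 fun i => v i
  exact ⟨c, c.2, fun i hi => congrFun hc ⟨i, hi⟩⟩

theorem exists_mem_hammingDist_lt_of_minDist_lt
    (hC : Nat.card C = Fintype.card F ^ (n - minDist C + 1)) {x y : Fin n → F} (hx : x ∈ C)
    (hy : y ∈ C) (hlt : minDist C < hammingDist x y) :
    ∃ z ∈ C, hammingDist x z < hammingDist x y ∧ z ≠ y ∧ hammingDist z y = minDist C := by
  have hd := minDist_pos hx hy (hammingDist_pos.mp (by omega))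
  obtain ⟨D, hD, hmemD⟩ :
      ∃ D : Finset (Fin n), #D = hammingDist x y ∧ ∀ i, i ∈ D ↔ x i ≠ y i :=
    ⟨_, rfl, fun i => by simp⟩
  obtain ⟨B, hBD, hB⟩ :=
    exists_subset_card_eq (s := D) (n := hammingDist x y - minDist C) (by omega)
  have hBne : B ≠ D := by
    rintro rfl
    omega
  obtain ⟨c, hcD, hcB⟩ := exists_of_ssubset (hBD.ssubset_of_ne hBne)
  have hcDB : c ∈ D \ B := mem_sdiff.mpr ⟨hcD, hcB⟩
  have hDB : #(D \ B) = minDist C := by rw [card_sdiff_of_subset hBD]; omega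
  have hS : #(insert c (D \ B)ᶜ) = n - minDist C + 1 := by
    rw [card_insert_of_notMem (by simpa using hcDB), card_compl, Fintype.card_fin, hDB]
  obtain ⟨z, hzC, hz⟩ :=
    exists_mem_eqOn_of_card_eq_pow (by omega) (hS ▸ hC) (Function.update y c (x c))
  have hzc : z c = x c := by simpa using hz c (mem_insert_self _ _)
  have hzy : ∀ i ∉ D \ B, z i = y i := fun i hi => by
    simpa [(ne_of_mem_of_not_mem hcDB hi).symm] using hz i (mem_insert_of_mem (mem_compl.mpr hi))
  have hzy_ne : z ≠ y := fun h => (hmemD c).mp hcD (hzc ▸ congrFun h c)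
  refine ⟨z, hzC, ?_, hzy_ne, le_antisymm ?_ (minDist_le_hammingDist hzC hy hzy_ne)⟩
  · calc hammingDist x z ≤ #(D.erase c) := hammingDist_le_card_of_eqOn_compl fun i hi => by
          by_cases hic : i = c
          · exact hic ▸ hzc.symm
          have hiD : i ∉ D := fun h => hi (mem_erase.mpr ⟨hic, h⟩)
          rw [hzy i fun h => hiD (mem_sdiff.mp h).1]
          simpa [hmemD] using hiD
      _ < hammingDist x y := hD ▸ card_erase_lt_of_mem hcD
  · exact hDB ▸ hammingDist_le_card_of_eqOn_compl hzy

theorem mdGraph_reachable_of_card_eq_pow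
    (hC : Nat.card C = Fintype.card F ^ (n - minDist C + 1)) (x y : C) :
    (mdGraph C).Reachable x y := by
  induction hxy : hammingDist (x : Fin n → F) y using Nat.strong_induction_on generalizing y with
  | _ e ih =>
  obtain rfl | hne := eq_or_ne x y
  · rfl
  have hne' : (x : Fin n → F) ≠ y := Subtype.val_injective.ne hne
  obtain heq | hlt := (minDist_le_hammingDist x.2 y.2 hne').eq_or_lt
  · exact (show (mdGraph C).Adj x y from ⟨hne, heq.symm⟩).reachable
  obtain ⟨z, hzC, hzx, hzy, hzd⟩ := exists_mem_hammingDist_lt_of_minDist_lt hC x.2 y.2 hlt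
  have hadj : (mdGraph C).Adj ⟨z, hzC⟩ y := ⟨fun h => hzy (congrArg Subtype.val h), hzd⟩
  exact (ih _ (hxy ▸ hzx) ⟨z, hzC⟩ rfl).trans hadj.reachable

end Code

theorem mdGraph_connected_of_MDS_general
    {F : Type*} [Fintype F] [DecidableEq F]
    {n d : ℕ}
    (C : Set (Fin n → F)) (h2 : 2 ≤ Nat.card C)
    (hmin : minDist C = d)
    (hMDS : Nat.card C = Fintype.card F ^ (n - d + 1)) :
    (mdGraph C).Connected := by
  have : Nonempty C := (Nat.card_pos_iff.mp (by omega)).1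
  subst hmin
  exact ⟨mdGraph_reachable_of_card_eq_pow hMDS⟩

/-- The minimum-distance graph of an `(n, M, d)_q` MDS code with
`M = q^{n−d+1} ≥ 2` codewords is connected. -/
theorem mdGraph_connected_of_MDS
    {F : Type*} [Field F] [Fintype F] [DecidableEq F]
    {n d : ℕ} (hd : 1 ≤ d) (hdn : d ≤ n)
    (C : Set (Fin n → F)) (h2 : 2 ≤ Nat.card C)
    (hmin : minDist C = d)
    (hMDS : Nat.card C = Fintype.card F ^ (n - d + 1)) :
    (mdGraph C).Connected :=
  mdGraph_connected_of_MDS_general C h2 hmin hMDS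
end

section
/- Let q be a prime power, f : F_q^k → S a function, t_d ≤ t_f natural numbers, and λ ≥ 1. Suppose there exists a map Col : F_q^k → {1, …, λ} such that Col(u) ≠ Col(v) whenever d(u, v) ≤ 2t_f and f(u) ≠ f(v) (such a coloring exists in particular for any locally (2t_f, λ)-bounded function whose function balls are contiguous blocks with respect to some total order on Im(f)). Suppose further there exists a systematic [n, k] linear code over F_q with minimum distance at least 2t_d + 1. Then r_f(k, t_d, t_f) ≤ n − k + N(λ, 2(t_f − t_d)), where N(λ, D) is the minimum length of a q-ary code with λ codewords and pairwise Hamming distance at least D. -/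
/-!
Encode `u` as `(u, w(u), p(Col u))`, where `(u, w(u))` is the codeword of `u` in the systematic
code and `p` is a code of `λ` words with pairwise distance `2(t_f - t_d)`. The blocks `(u, w(u))`
alone keep any two encodings `2t_d + 1` apart. If `f u ≠ f v`, then either `u` and `v` are more
than `2t_f` apart already, or their colors differ and the last block adds the missing
`2(t_f - t_d)`.
-/

/-- An `(f, t_d, t_f)`-FCC (with `d_d = 2t_d+1`, `d_f = 2t_f+1`). -/
def IsFCC {F S : Type*} [Fintype F] [DecidableEq F] {k r : ℕ}
    (f : (Fin k → F) → S) (dd df : ℕ)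
    (c : (Fin k → F) → (Fin (k + r) → F)) : Prop :=
  (∀ u i, c u (Fin.castAdd r i) = u i) ∧
  (∀ u v, u ≠ v → dd ≤ hammingDist (c u) (c v)) ∧
  (∀ u v, f u ≠ f v → df ≤ hammingDist (c u) (c v))

/-- The optimal redundancy `r_f(k, t_d, t_f)`. -/
noncomputable def optRedundancy {F S : Type*} [Fintype F] [DecidableEq F] {k : ℕ}
    (f : (Fin k → F) → S) (dd df : ℕ) : ℕ :=
  sInf {r : ℕ | ∃ c : (Fin k → F) → (Fin (k + r) → F), IsFCC f dd df c}

/-- `N(M, d)`: the minimum length of a code over `F` with `M` codewords and pairwise Hamming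
distance at least `d`. -/
noncomputable def Ncode (F : Type*) [Fintype F] [DecidableEq F] (M d : ℕ) : ℕ :=
  sInf {n : ℕ | ∃ p : Fin M → Fin n → F, ∀ i j, i ≠ j → d ≤ hammingDist (p i) (p j)}

section Hamming

variable {β : Type*} [DecidableEq β]

theorem hammingDist_append_s12 {m l : ℕ} (a a' : Fin m → β) (b b' : Fin l → β) :
    hammingDist (Fin.append a b) (Fin.append a' b') = hammingDist a a' + hammingDist b b' := by
  simp only [hammingDist, Finset.card_filter, Fin.sum_univ_add, Fin.append_left, Fin.append_right]

theorem hammingDist_comp_equiv {ι κ : Type*} [Fintype ι] [Fintype κ] (e : ι ≃ κ) (x y : κ → β) :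
    hammingDist (x ∘ e) (y ∘ e) = hammingDist x y :=
  Finset.card_equiv e (by simp)

def Fin.suffix {k n : ℕ} (hkn : k ≤ n) (x : Fin n → β) : Fin (n - k) → β :=
  fun j => x ⟨k + j, by omega⟩

theorem hammingDist_eq_castLE_add_suffix {k n : ℕ} (hkn : k ≤ n) (x y : Fin n → β) :
    hammingDist x y = hammingDist (x ∘ Fin.castLE hkn) (y ∘ Fin.castLE hkn)
      + hammingDist (Fin.suffix hkn x) (Fin.suffix hkn y) := by
  have hsplit : ∀ z : Fin n → β,
      z ∘ finCongr (by omega : k + (n - k) = n)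
        = Fin.append (z ∘ Fin.castLE hkn) (Fin.suffix hkn z) := by
    intro z
    funext i
    induction i using Fin.addCases with
    | left i => rw [Fin.append_left]; rfl
    | right j => rw [Fin.append_right]; rfl
  rw [← hammingDist_comp_equiv (finCongr (by omega : k + (n - k) = n)), hsplit, hsplit,
    hammingDist_append_s12]

/-- The indicator words of the blocks `{i} × Fin d` in `Fin M × Fin d`, flattened. -/
theorem exists_code_of_length_mul [Nontrivial β] (M d : ℕ) :
    ∃ p : Fin M → Fin (M * d) → β, ∀ i j, i ≠ j → d ≤ hammingDist (p i) (p j) := by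
  obtain ⟨a, b, hab⟩ := exists_pair_ne β
  let q : Fin M → Fin M × Fin d → β := fun i x => if x.1 = i then a else b
  refine ⟨fun i => q i ∘ finProdFinEquiv.symm, fun i j hij => ?_⟩
  rw [hammingDist_comp_equiv, hammingDist]
  calc d = (({i} : Finset (Fin M)) ×ˢ (Finset.univ : Finset (Fin d))).card := by simp
    _ ≤ _ := Finset.card_le_card fun x hx => by
      simp only [Finset.mem_product, Finset.mem_singleton] at hx
      simp [q, hx.1, hij, hab]

end Hamming

theorem exists_code_of_length_Ncode (F : Type*) [Fintype F] [DecidableEq F] [Nontrivial F]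
    (M d : ℕ) :
    ∃ p : Fin M → Fin (Ncode F M d) → F, ∀ i j, i ≠ j → d ≤ hammingDist (p i) (p j) := by
  have hne : {n | ∃ p : Fin M → Fin n → F, ∀ i j, i ≠ j → d ≤ hammingDist (p i) (p j)}.Nonempty :=
    ⟨M * d, exists_code_of_length_mul M d⟩
  exact Nat.sInf_mem hne

theorem isFCC_append_coloring {F S : Type*} [Fintype F] [DecidableEq F] {k n m lam : ℕ}
    (hkn : k ≤ n) (f : (Fin k → F) → S) (td tf : ℕ) (Col : (Fin k → F) → Fin lam)
    (hCol : ∀ u v : Fin k → F, hammingDist u v ≤ 2 * tf → f u ≠ f v → Col u ≠ Col v)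
    (E : (Fin k → F) → Fin n → F) (hEsys : ∀ u i, E u (Fin.castLE hkn i) = u i)
    (hEdist : ∀ u v : Fin k → F, u ≠ v → 2 * td + 1 ≤ hammingDist (E u) (E v))
    (p : Fin lam → Fin m → F) (hp : ∀ i j, i ≠ j → 2 * (tf - td) ≤ hammingDist (p i) (p j)) :
    IsFCC (r := n - k + m) f (2 * td + 1) (2 * tf + 1)
      fun u => Fin.append u (Fin.append (Fin.suffix hkn (E u)) (p (Col u))) := by
  have hE : ∀ u v, hammingDist (E u) (E v)
      = hammingDist u v + hammingDist (Fin.suffix hkn (E u)) (Fin.suffix hkn (E v)) := by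
    intro u v
    rw [hammingDist_eq_castLE_add_suffix hkn]
    congr 2 <;> funext i <;> exact hEsys _ i
  refine ⟨fun u i => Fin.append_left _ _ i, fun u v huv => ?_, fun u v hf => ?_⟩
  · have := hE u v ▸ hEdist u v huv
    simp only [hammingDist_append_s12]
    omega
  · have := hE u v ▸ hEdist u v (by rintro rfl; exact hf rfl)
    simp only [hammingDist_append_s12]
    by_cases hclose : hammingDist u v ≤ 2 * tf
    · have := hp _ _ (hCol u v hclose hf)
      omega
    · omega

theorem optRedundancy_le_of_coloring_general
    {F S : Type*} [Field F] [Fintype F] [DecidableEq F]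
    {k n : ℕ} (hkn : k ≤ n) (f : (Fin k → F) → S) (td tf lam : ℕ)
    (Col : (Fin k → F) → Fin lam)
    (hCol : ∀ u v : Fin k → F, hammingDist u v ≤ 2 * tf → f u ≠ f v → Col u ≠ Col v)
    (C : (Fin k → F) →ₗ[F] (Fin n → F))
    (hCsys : ∀ (u : Fin k → F) (i : Fin k), C u (Fin.castLE hkn i) = u i)
    (hCdist : ∀ u v : Fin k → F, u ≠ v → 2 * td + 1 ≤ hammingDist (C u) (C v)) :
    optRedundancy f (2 * td + 1) (2 * tf + 1) ≤ n - k + Ncode F lam (2 * (tf - td)) := by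
  obtain ⟨p, hp⟩ := exists_code_of_length_Ncode F lam (2 * (tf - td))
  exact Nat.sInf_le ⟨_, isFCC_append_coloring hkn f td tf Col hCol C hCsys hCdist p hp⟩

/-- Given a coloring `Col : F_q^k → [λ]` separating close vectors with
different function values, and a systematic `[n, k]` linear code over `F_q` of minimum
distance at least `2t_d+1`, we have `r_f(k, t_d, t_f) ≤ n − k + N(λ, 2(t_f − t_d))`. -/
theorem optRedundancy_le_of_coloring
    {F S : Type*} [Field F] [Fintype F] [DecidableEq F]
    {k n : ℕ} (hkn : k ≤ n) (f : (Fin k → F) → S) (td tf lam : ℕ)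
    (htdtf : td ≤ tf) (hlam : 1 ≤ lam)
    (Col : (Fin k → F) → Fin lam)
    (hCol : ∀ u v : Fin k → F, hammingDist u v ≤ 2 * tf → f u ≠ f v → Col u ≠ Col v)
    (C : (Fin k → F) →ₗ[F] (Fin n → F)) (hCinj : Function.Injective C)
    (hCsys : ∀ (u : Fin k → F) (i : Fin k), C u (Fin.castLE hkn i) = u i)
    (hCdist : ∀ u v : Fin k → F, u ≠ v → 2 * td + 1 ≤ hammingDist (C u) (C v)) :
    optRedundancy f (2 * td + 1) (2 * tf + 1) ≤ n - k + Ncode F lam (2 * (tf - td)) :=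
  optRedundancy_le_of_coloring_general hkn f td tf lam Col hCol C hCsys hCdist
end
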